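/- arXiv:1111.1361 — 2 statements merged into one kernel-verified Lean document; each statement's English description precedes it below -/
import Mathlib

section
/- Let X and Y be Banach spaces, Z = X ∔ Y their topological direct sum, let L ⊂ Z be a graph subspace with respect to X with angular operator A_X ∈ L(X, Y), and let M ⊂ Z be a graph subspace with respect to Y with angular operator A_Y ∈ L(Y, X). Then the following are equivalent: (i) I_X − A_Y A_X has a bounded inverse; (ii) I_Y − A_X A_Y has a bounded inverse; (iii) the block operator W := [[I_X, A_Y], [A_X, I_Y]] ∈ L(Z) has a bounded inverse, given by W^{-1} = [[(I_X − A_Y A_X)^{-1}, −(I_X − A_Y A_X)^{-1} A_Y], [−(I_Y − A_X A_Y)^{-1} A_X, (I_Y − A_X A_Y)^{-1}]]; (iv) L ∔ M = Z. -/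
/-!
Writing `W (x, y) = (x, A x) + (B y, y)` exhibits `W` as the sum map `X × Y → L + M` through the
parametrisations of `L` and `M` by `X` and `Y`; hence `W` is bijective iff `L ∔ M = Z`, and on a
Banach space a bijective operator is invertible (open mapping theorem). The equivalence of (i) and
(ii) is Jacobson's lemma, `(1 - A B)⁻¹ = 1 + A (1 - B A)⁻¹ B`. Since `A (1 - B A) = (1 - A B) A`,
also `A (1 - B A)⁻¹ = (1 - A B)⁻¹ A`, and with this the block formula for `W⁻¹` is checked
directly. Conversely, `x ↦ (W⁻¹ (x, 0)).1` inverts `1 - B A`.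
-/

open Function

namespace LinearMap

variable {R M M₁ M₂ : Type*} [Ring R] [AddCommGroup M] [AddCommGroup M₁] [AddCommGroup M₂]
  [Module R M] [Module R M₁] [Module R M₂]

theorem bijective_coprod_iff_isCompl {f : M₁ →ₗ[R] M} {g : M₂ →ₗ[R] M}
    (hf : Injective f) (hg : Injective g) :
    Bijective (f.coprod g) ↔ IsCompl (range f) (range g) := by
  rw [isCompl_iff, codisjoint_iff, ← range_coprod, range_eq_top, Bijective, ← ker_eq_bot]
  refine and_congr_left fun _ => ⟨fun hker => ?_, fun hdisj => ?_⟩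
  · rw [Submodule.disjoint_def]
    rintro _ ⟨a, rfl⟩ ⟨b, hb⟩
    have : (a, -b) ∈ ker (f.coprod g) := by simp [hb]
    simp_all
  · rw [ker_coprod_of_disjoint_range f g hdisj, ker_eq_bot.mpr hf, ker_eq_bot.mpr hg,
      Submodule.prod_bot]

end LinearMap

namespace ContinuousLinearMap

variable {𝕜 E X Y : Type*} [NormedField 𝕜]
  [NormedAddCommGroup E] [NormedSpace 𝕜 E]
  [NormedAddCommGroup X] [NormedSpace 𝕜 X] [NormedAddCommGroup Y] [NormedSpace 𝕜 Y]

theorem isUnit_of_leftInverse_of_rightInverse {f g : E →L[𝕜] E}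
    (hl : LeftInverse g f) (hr : RightInverse g f) : IsUnit f :=
  isUnit_iff_exists.mpr ⟨g, ext hr, ext hl⟩

theorem apply_unit_inv_apply {f : E →L[𝕜] E} (h : IsUnit f) (x : E) :
    f ((↑h.unit⁻¹ : E →L[𝕜] E) x) = x :=
  DFunLike.congr_fun h.mul_val_inv x

theorem unit_inv_apply_apply {f : E →L[𝕜] E} (h : IsUnit f) (x : E) :
    (↑h.unit⁻¹ : E →L[𝕜] E) (f x) = x :=
  DFunLike.congr_fun h.val_inv_mul x

theorem apply_unit_inv_eq_unit_inv_apply {f : X →L[𝕜] X} {g : Y →L[𝕜] Y} {A : X →L[𝕜] Y}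
    (hf : IsUnit f) (hg : IsUnit g) (hA : A ∘L f = g ∘L A) (x : X) :
    A ((↑hf.unit⁻¹ : X →L[𝕜] X) x) = (↑hg.unit⁻¹ : Y →L[𝕜] Y) (A x) := by
  calc A ((↑hf.unit⁻¹ : X →L[𝕜] X) x)
      = (↑hg.unit⁻¹ : Y →L[𝕜] Y) ((g ∘L A) ((↑hf.unit⁻¹ : X →L[𝕜] X) x)) :=
        (unit_inv_apply_apply hg _).symm
    _ = (↑hg.unit⁻¹ : Y →L[𝕜] Y) (A x) := by rw [← hA, comp_apply, apply_unit_inv_apply]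

variable (A : X →L[𝕜] Y) (B : Y →L[𝕜] X)

theorem comp_one_sub_comp : A ∘L (1 - B ∘L A) = (1 - A ∘L B) ∘L A := by
  ext x; simp

variable {A B}

theorem unit_inv_sub_comp_apply (h : IsUnit (1 - B ∘L A)) (x : X) :
    (↑h.unit⁻¹ : X →L[𝕜] X) (x - B (A x)) = x :=
  unit_inv_apply_apply h x

theorem unit_inv_apply_sub_comp_apply (h : IsUnit (1 - B ∘L A)) (x : X) :
    (↑h.unit⁻¹ : X →L[𝕜] X) x - B (A ((↑h.unit⁻¹ : X →L[𝕜] X) x)) = x :=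
  apply_unit_inv_apply h x

theorem isUnit_one_sub_comp_swap (h : IsUnit (1 - B ∘L A)) : IsUnit (1 - A ∘L B) := by
  set u : X →L[𝕜] X := ↑h.unit⁻¹
  refine isUnit_of_leftInverse_of_rightInverse (g := 1 + A ∘L u ∘L B) (fun y => ?_) fun y => ?_
  · simp only [add_apply, sub_apply, one_apply_eq_self, comp_apply]
    rw [map_sub B, unit_inv_sub_comp_apply]
    abel
  · have hu := congrArg A (unit_inv_apply_sub_comp_apply h (B y))
    rw [map_sub] at hu
    simp only [add_apply, sub_apply, one_apply_eq_self, comp_apply]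
    rw [map_add B, map_add A, ← hu]
    abel

variable (A B)

def angularBlock : (X × Y) →L[𝕜] (X × Y) :=
  ((ContinuousLinearMap.id 𝕜 X).prod A).coprod (B.prod (ContinuousLinearMap.id 𝕜 Y))

@[simp]
theorem angularBlock_apply (p : X × Y) : angularBlock A B p = (p.1 + B p.2, A p.1 + p.2) := rfl

def angularBlockInv (u : X →L[𝕜] X) (v : Y →L[𝕜] Y) : (X × Y) →L[𝕜] (X × Y) :=
  (u ∘L (fst 𝕜 X Y - B ∘L snd 𝕜 X Y)).prod (v ∘L (snd 𝕜 X Y - A ∘L fst 𝕜 X Y))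

@[simp]
theorem angularBlockInv_apply (u : X →L[𝕜] X) (v : Y →L[𝕜] Y) (p : X × Y) :
    angularBlockInv A B u v p = (u (p.1 - B p.2), v (p.2 - A p.1)) := rfl

variable {A B}

theorem angularBlock_mul_angularBlockInv (hBA : IsUnit (1 - B ∘L A))
    (hAB : IsUnit (1 - A ∘L B)) :
    angularBlock A B * angularBlockInv A B ↑hBA.unit⁻¹ ↑hAB.unit⁻¹ = 1 := by
  set u : X →L[𝕜] X := ↑hBA.unit⁻¹
  set v : Y →L[𝕜] Y := ↑hAB.unit⁻¹
  have hBv (y : Y) : B (v y) = u (B y) :=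
    apply_unit_inv_eq_unit_inv_apply hAB hBA (comp_one_sub_comp B A) y
  have hAu (x : X) : A (u x) = v (A x) :=
    apply_unit_inv_eq_unit_inv_apply hBA hAB (comp_one_sub_comp A B) x
  refine ext fun ⟨x, y⟩ => ?_
  simp only [mul_apply_eq_comp, angularBlockInv_apply, angularBlock_apply, one_apply_eq_self,
    hBv, hAu, ← map_add]
  have hx : x - B y + B (y - A x) = x - B (A x) := by rw [map_sub]; abel
  have hy : A (x - B y) + (y - A x) = y - A (B y) := by rw [map_sub]; abel
  rw [hx, hy, unit_inv_sub_comp_apply, unit_inv_sub_comp_apply]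

theorem angularBlockInv_mul_angularBlock (hBA : IsUnit (1 - B ∘L A))
    (hAB : IsUnit (1 - A ∘L B)) :
    angularBlockInv A B ↑hBA.unit⁻¹ ↑hAB.unit⁻¹ * angularBlock A B = 1 := by
  refine ext fun ⟨x, y⟩ => ?_
  simp only [mul_apply_eq_comp, angularBlockInv_apply, angularBlock_apply, one_apply_eq_self]
  have hx : x + B y - B (A x + y) = x - B (A x) := by rw [map_add]; abel
  have hy : A x + y - A (x + B y) = y - A (B y) := by rw [map_add]; abel
  rw [hx, hy, unit_inv_sub_comp_apply, unit_inv_sub_comp_apply]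

theorem isUnit_angularBlock (hBA : IsUnit (1 - B ∘L A)) : IsUnit (angularBlock A B) :=
  ⟨⟨_, _, angularBlock_mul_angularBlockInv hBA (isUnit_one_sub_comp_swap hBA),
    angularBlockInv_mul_angularBlock hBA (isUnit_one_sub_comp_swap hBA)⟩, rfl⟩

theorem unit_inv_angularBlock (hBA : IsUnit (1 - B ∘L A)) (hAB : IsUnit (1 - A ∘L B))
    (hW : IsUnit (angularBlock A B)) :
    ↑hW.unit⁻¹ = angularBlockInv A B ↑hBA.unit⁻¹ ↑hAB.unit⁻¹ :=
  Units.inv_eq_of_mul_eq_one_right (angularBlock_mul_angularBlockInv hBA hAB)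

theorem isUnit_one_sub_comp_of_isUnit_angularBlock (hW : IsUnit (angularBlock A B)) :
    IsUnit (1 - B ∘L A) := by
  set S : (X × Y) →L[𝕜] (X × Y) := ↑hW.unit⁻¹
  refine isUnit_of_leftInverse_of_rightInverse (g := fst 𝕜 X Y ∘L S ∘L inl 𝕜 X Y)
    (fun x => ?_) fun x => ?_
  · have hx : angularBlock A B (x, -A x) = ((1 - B ∘L A) x, 0) := by simp [sub_eq_add_neg]
    simp only [comp_apply, inl_apply, coe_fst']
    rw [← hx, unit_inv_apply_apply]
  · obtain ⟨h1, h2⟩ := Prod.ext_iff.mp (apply_unit_inv_apply hW (x, 0))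
    simp only [angularBlock_apply] at h1 h2
    simp only [comp_apply, inl_apply, coe_fst', sub_apply, one_apply_eq_self]
    rwa [eq_neg_of_add_eq_zero_right h2, map_neg, ← sub_eq_add_neg] at h1

theorem isCompl_graph_iff_bijective_angularBlock :
    IsCompl (LinearMap.graph (A : X →ₗ[𝕜] Y))
        ((LinearMap.graph (B : Y →ₗ[𝕜] X)).map (LinearEquiv.prodComm 𝕜 Y X).toLinearMap) ↔
      Bijective (angularBlock A B) := by
  have hM : (LinearMap.graph (B : Y →ₗ[𝕜] X)).map (LinearEquiv.prodComm 𝕜 Y X).toLinearMap =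
      LinearMap.range ((B : Y →ₗ[𝕜] X).prod LinearMap.id) := by
    rw [LinearMap.graph_eq_range_prod, ← LinearMap.range_comp]
    rfl
  rw [LinearMap.graph_eq_range_prod, hM, ← LinearMap.bijective_coprod_iff_isCompl
    (fun _ _ h => congrArg Prod.fst h) fun _ _ h => congrArg Prod.snd h]
  rfl

end ContinuousLinearMap

open ContinuousLinearMap in
theorem statement_4 {X Y : Type*}
    [NormedAddCommGroup X] [NormedSpace ℂ X] [CompleteSpace X]
    [NormedAddCommGroup Y] [NormedSpace ℂ Y] [CompleteSpace Y]
    (A : X →L[ℂ] Y) (B : Y →L[ℂ] X)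
    (L M : Submodule ℂ (X × Y))
    (hL : L = LinearMap.graph (A : X →ₗ[ℂ] Y))
    (hM : M = (LinearMap.graph (B : Y →ₗ[ℂ] X)).map
      (LinearEquiv.prodComm ℂ Y X).toLinearMap)
    (W : (X × Y) →L[ℂ] (X × Y))
    (hW : ∀ p : X × Y, W p = (p.1 + B p.2, A p.1 + p.2)) :
    -- (i) ↔ (ii)
    (IsUnit (1 - B ∘L A) ↔ IsUnit (1 - A ∘L B)) ∧
    -- (i) ↔ (iii)
    (IsUnit (1 - B ∘L A) ↔ IsUnit W) ∧
    -- the explicit formula for `W⁻¹` in case of invertibility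
    (∀ (hBA : IsUnit (1 - B ∘L A)) (hAB : IsUnit (1 - A ∘L B)) (hWu : IsUnit W),
      ∀ p : X × Y,
        (↑hWu.unit⁻¹ : (X × Y) →L[ℂ] (X × Y)) p =
          ((↑hBA.unit⁻¹ : X →L[ℂ] X) (p.1 - B p.2),
            (↑hAB.unit⁻¹ : Y →L[ℂ] Y) (p.2 - A p.1))) ∧
    -- (i) ↔ (iv)
    (IsUnit (1 - B ∘L A) ↔ IsCompl L M) := by
  obtain rfl : W = angularBlock A B := ext hW
  subst hL hM
  have hiii : IsUnit (1 - B ∘L A) ↔ IsUnit (angularBlock A B) :=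
    ⟨isUnit_angularBlock, isUnit_one_sub_comp_of_isUnit_angularBlock⟩
  refine ⟨⟨isUnit_one_sub_comp_swap, isUnit_one_sub_comp_swap⟩, hiii,
    fun hBA hAB hW p => by rw [unit_inv_angularBlock hBA hAB hW, angularBlockInv_apply], ?_⟩
  rw [hiii, isUnit_iff_bijective, isCompl_graph_iff_bijective_angularBlock]
end

section
/- Let H be a complex Hilbert space and L, M ⊂ H closed subspaces with corresponding orthogonal projections P_L and P_M. Then ‖P_L − P_M‖ < 1 if and only if M is the graph of a bounded operator K ∈ L(L, L^⊥), i.e. M = {x + Kx : x ∈ L}. In that case ‖K‖ = ‖P_L − P_M‖ / √(1 − ‖P_L − P_M‖²) and ‖P_L − P_M‖ = ‖K‖ / √(1 + ‖K‖²). -/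
/-!
Write `d = ‖P_L - P_M‖`. Every `m ∈ M` satisfies `‖m - P_L m‖ ≤ d ‖m‖`, so for `d < 1` the map
`P_L : M → L` is bounded below. Its range is also dense: a vector of `L` orthogonal to `P_L M`
lies in `L ⊓ Mᗮ`, where `‖x‖ = ‖(P_L - P_M) x‖ ≤ d ‖x‖`. Hence `P_L : M → L` is an isomorphism
and `M` is the graph of `K = P_{Lᗮ} ∘ (P_L|_M)⁻¹`.

Conversely, let `M` be the graph of `K` and `c = ‖K‖`. Then `‖P_{Lᗮ} u‖ ≤ c ‖P_L u‖` on `M` and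
`‖P_L v‖ ≤ c ‖P_{Lᗮ} v‖` on `Mᗮ`; splitting `z = P_M z + P_{Mᗮ} z` gives `d² (1 + c²) ≤ c²`.
Testing `P_L - P_M` on `x + K x` gives `c² (1 - d²) ≤ d²`. Hence `d² (1 + c²) = c²`, which is
equivalent to each of the two formulas.
-/

open Submodule

namespace ContinuousLinearMap

variable {𝕜 E F : Type*} [NontriviallyNormedField 𝕜] [SeminormedAddCommGroup E]
  [SeminormedAddCommGroup F] [NormedSpace 𝕜 E] [NormedSpace 𝕜 F]

theorem opNorm_sq_mul_le_of_forall {T : E →L[𝕜] F} {a b : ℝ} (ha : 0 < a) (hb : 0 ≤ b)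
    (h : ∀ x, ‖T x‖ ^ 2 * a ≤ b * ‖x‖ ^ 2) : ‖T‖ ^ 2 * a ≤ b := by
  have hba : 0 ≤ b / a := div_nonneg hb ha.le
  have hT : ‖T‖ ≤ √(b / a) := by
    refine T.opNorm_le_bound (Real.sqrt_nonneg _) fun x => ?_
    rw [← Real.sqrt_sq (norm_nonneg (T x)), ← Real.sqrt_sq (norm_nonneg x),
      ← Real.sqrt_mul hba]
    refine Real.sqrt_le_sqrt ?_
    rw [div_mul_eq_mul_div, le_div_iff₀ ha]
    exact h x
  have := pow_le_pow_left₀ (norm_nonneg T) hT 2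
  rwa [Real.sq_sqrt hba, le_div_iff₀ ha] at this

end ContinuousLinearMap

theorem sq_mul_one_add_sq_le_of_le_mul {a b c : ℝ} (hb : 0 ≤ b) (h : b ≤ c * a) :
    b ^ 2 * (1 + c ^ 2) ≤ c ^ 2 * (a ^ 2 + b ^ 2) := by
  nlinarith [pow_le_pow_left₀ hb h 2]

theorem eq_div_sqrt_one_add_sq {c d : ℝ} (hc : 0 ≤ c) (hd : 0 ≤ d)
    (h : d ^ 2 * (1 + c ^ 2) = c ^ 2) : d = c / √(1 + c ^ 2) := by
  rw [eq_div_iff (by positivity), ← Real.sqrt_sq hd, ← Real.sqrt_mul (sq_nonneg d), h,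
    Real.sqrt_sq hc]

theorem eq_div_sqrt_one_sub_sq {c d : ℝ} (hc : 0 ≤ c) (hd : 0 ≤ d)
    (h : d ^ 2 * (1 + c ^ 2) = c ^ 2) : c = d / √(1 - d ^ 2) := by
  have hd1 : 0 < 1 - d ^ 2 := by nlinarith
  rw [eq_div_iff (Real.sqrt_pos.mpr hd1).ne', ← Real.sqrt_sq hc, ← Real.sqrt_mul (sq_nonneg c),
    show c ^ 2 * (1 - d ^ 2) = d ^ 2 by linarith, Real.sqrt_sq hd]

namespace Submodule

variable {𝕜 E : Type*} [RCLike 𝕜] [NormedAddCommGroup E] [InnerProductSpace 𝕜 E]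
  {L M : Submodule 𝕜 E}

def IsGraphOf (M : Submodule 𝕜 E) (K : L →L[𝕜] Lᗮ) : Prop :=
  (M : Set E) = {z : E | ∃ x : L, z = (x : E) + (K x : E)}

theorem IsGraphOf.mem_iff {K : L →L[𝕜] Lᗮ} (hK : IsGraphOf M K) {u : E} :
    u ∈ M ↔ ∃ x : L, u = x + K x := by
  rw [← SetLike.mem_coe, hK]
  rfl

theorem IsGraphOf.add_apply_mem {K : L →L[𝕜] Lᗮ} (hK : IsGraphOf M K) (x : L) :
    (x : E) + K x ∈ M :=
  hK.mem_iff.mpr ⟨x, rfl⟩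

section

variable [L.HasOrthogonalProjection]

theorem starProjection_add_of_mem_orthogonal {x y : E} (hx : x ∈ L) (hy : y ∈ Lᗮ) :
    L.starProjection (x + y) = x :=
  eq_starProjection_of_mem_orthogonal' hx hy rfl

theorem starProjection_orthogonal_add_of_mem_orthogonal {x y : E} (hx : x ∈ L) (hy : y ∈ Lᗮ) :
    Lᗮ.starProjection (x + y) = y :=
  eq_starProjection_of_mem_orthogonal' hy (L.le_orthogonal_orthogonal hx) (add_comm x y)

theorem IsGraphOf.norm_starProjection_orthogonal_le {K : L →L[𝕜] Lᗮ} (hK : IsGraphOf M K)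
    {u : E} (hu : u ∈ M) :
    ‖Lᗮ.starProjection u‖ ≤ ‖K‖ * ‖L.starProjection u‖ := by
  obtain ⟨x, rfl⟩ := hK.mem_iff.mp hu
  rw [starProjection_add_of_mem_orthogonal x.2 (K x).2,
    starProjection_orthogonal_add_of_mem_orthogonal x.2 (K x).2]
  exact K.le_opNorm x

theorem IsGraphOf.norm_starProjection_le_of_mem_orthogonal {K : L →L[𝕜] Lᗮ} (hK : IsGraphOf M K)
    {v : E} (hv : v ∈ Mᗮ) :
    ‖L.starProjection v‖ ≤ ‖K‖ * ‖Lᗮ.starProjection v‖ := by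
  set p := L.orthogonalProjectionOnto v
  -- `v ⊥ p + K p`, and `K p ∈ Lᗮ` only sees the `Lᗮ`-component of `v`
  have horth : inner 𝕜 (p : E) v = -inner 𝕜 (K p : E) (Lᗮ.starProjection v) := by
    have h := inner_right_of_mem_orthogonal (hK.add_apply_mem p) hv
    rw [inner_add_left, ← inner_orthogonalProjectionOnto_eq_of_mem_left (K p) v] at h
    exact eq_neg_of_add_eq_zero_left h
  have key : ‖(p : E)‖ ^ 2 ≤ ‖K‖ * ‖(p : E)‖ * ‖Lᗮ.starProjection v‖ :=
    calc ‖(p : E)‖ ^ 2 = RCLike.re (inner 𝕜 (L.starProjection v) v) :=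
          (L.re_inner_starProjection_eq_normSq v).symm
      _ = -RCLike.re (inner 𝕜 (K p : E) (Lᗮ.starProjection v)) := by
          rw [← map_neg, ← horth]; rfl
      _ ≤ ‖(K p : E)‖ * ‖Lᗮ.starProjection v‖ :=
          (neg_le_abs _).trans ((RCLike.abs_re_le_norm _).trans (norm_inner_le_norm _ _))
      _ ≤ ‖K‖ * ‖(p : E)‖ * ‖Lᗮ.starProjection v‖ := by gcongr; exact K.le_opNorm p
  change ‖(p : E)‖ ≤ _
  nlinarith [norm_nonneg (p : E), mul_nonneg (norm_nonneg K) (norm_nonneg (Lᗮ.starProjection v))]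

variable [M.HasOrthogonalProjection]

theorem norm_starProjection_orthogonal_le_of_mem {m : E} (hm : m ∈ M) :
    ‖Lᗮ.starProjection m‖ ≤ ‖L.starProjection - M.starProjection‖ * ‖m‖ := by
  have h : (L.starProjection - M.starProjection) m = -Lᗮ.starProjection m := by
    simp [starProjection_eq_self_iff.mpr hm]
  rw [← norm_neg, ← h]
  exact (L.starProjection - M.starProjection).le_opNorm m

theorem IsGraphOf.norm_starProjection_sub_apply_sq_mul_le {K : L →L[𝕜] Lᗮ} (hK : IsGraphOf M K)
    (z : E) :
    ‖(L.starProjection - M.starProjection) z‖ ^ 2 * (1 + ‖K‖ ^ 2) ≤ ‖K‖ ^ 2 * ‖z‖ ^ 2 := by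
  have hidem : L.starProjection (L.starProjection z) = L.starProjection z :=
    starProjection_eq_self_iff.mpr (L.starProjection_apply_mem z)
  have hL : L.starProjection ((L.starProjection - M.starProjection) z) =
      L.starProjection (Mᗮ.starProjection z) := by
    simp [map_sub, hidem]
  have hLperp : Lᗮ.starProjection ((L.starProjection - M.starProjection) z) =
      -Lᗮ.starProjection (M.starProjection z) := by
    simp [map_sub, hidem]
  have hu := sq_mul_one_add_sq_le_of_le_mul (norm_nonneg _)
    (hK.norm_starProjection_orthogonal_le (M.starProjection_apply_mem z))
  have hv := sq_mul_one_add_sq_le_of_le_mul (norm_nonneg _)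
    (hK.norm_starProjection_le_of_mem_orthogonal (Mᗮ.starProjection_apply_mem z))
  rw [← norm_sq_eq_add_norm_sq_starProjection] at hu
  rw [add_comm (‖Lᗮ.starProjection _‖ ^ 2), ← norm_sq_eq_add_norm_sq_starProjection] at hv
  rw [norm_sq_eq_add_norm_sq_starProjection _ L, hL, hLperp, norm_neg,
    norm_sq_eq_add_norm_sq_starProjection z M]
  linarith

theorem IsGraphOf.norm_starProjection_sub_sq_mul_le {K : L →L[𝕜] Lᗮ} (hK : IsGraphOf M K) :
    ‖L.starProjection - M.starProjection‖ ^ 2 * (1 + ‖K‖ ^ 2) ≤ ‖K‖ ^ 2 :=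
  ContinuousLinearMap.opNorm_sq_mul_le_of_forall (by positivity) (by positivity)
    hK.norm_starProjection_sub_apply_sq_mul_le

theorem IsGraphOf.norm_starProjection_sub_lt_one {K : L →L[𝕜] Lᗮ} (hK : IsGraphOf M K) :
    ‖L.starProjection - M.starProjection‖ < 1 := by
  have h := hK.norm_starProjection_sub_sq_mul_le
  rw [← sq_lt_one_iff₀ (norm_nonneg _),
    ← mul_lt_mul_iff_of_pos_right (by positivity : 0 < 1 + ‖K‖ ^ 2)]
  linarith

theorem IsGraphOf.norm_sq_mul_le {K : L →L[𝕜] Lᗮ} (hK : IsGraphOf M K) :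
    ‖K‖ ^ 2 * (1 - ‖L.starProjection - M.starProjection‖ ^ 2) ≤
      ‖L.starProjection - M.starProjection‖ ^ 2 := by
  set d := ‖L.starProjection - M.starProjection‖
  have hd0 : 0 ≤ d := norm_nonneg _
  have hd : d < 1 := hK.norm_starProjection_sub_lt_one
  refine ContinuousLinearMap.opNorm_sq_mul_le_of_forall (by nlinarith) (sq_nonneg d) fun x => ?_
  have h := norm_starProjection_orthogonal_le_of_mem (L := L) (hK.add_apply_mem x)
  have hpyth := norm_sq_eq_add_norm_sq_starProjection ((x : E) + K x) L
  rw [starProjection_orthogonal_add_of_mem_orthogonal x.2 (K x).2] at h hpyth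
  rw [starProjection_add_of_mem_orthogonal x.2 (K x).2] at hpyth
  have := pow_le_pow_left₀ (norm_nonneg _) h 2
  rw [mul_pow, hpyth] at this
  change ‖(K x : E)‖ ^ 2 * (1 - d ^ 2) ≤ d ^ 2 * ‖(x : E)‖ ^ 2
  linarith

theorem IsGraphOf.norm_starProjection_sub_sq_mul_eq {K : L →L[𝕜] Lᗮ} (hK : IsGraphOf M K) :
    ‖L.starProjection - M.starProjection‖ ^ 2 * (1 + ‖K‖ ^ 2) = ‖K‖ ^ 2 := by
  linarith [hK.norm_starProjection_sub_sq_mul_le, hK.norm_sq_mul_le]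

theorem mul_norm_le_norm_orthogonalProjectionOnto {m : E} (hm : m ∈ M) :
    (1 - ‖L.starProjection - M.starProjection‖) * ‖m‖ ≤ ‖L.orthogonalProjectionOnto m‖ := by
  have h := norm_starProjection_orthogonal_le_of_mem (L := L) hm
  have := norm_add_le (L.starProjection m) (Lᗮ.starProjection m)
  rw [starProjection_add_starProjection_orthogonal] at this
  change _ ≤ ‖L.starProjection m‖
  linarith

theorem antilipschitzWith_orthogonalProjectionOnto_comp_subtypeL
    (hd : ‖L.starProjection - M.starProjection‖ < 1) :
    AntilipschitzWith (1 - ‖L.starProjection - M.starProjection‖)⁻¹.toNNReal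
      (L.orthogonalProjectionOnto ∘L M.subtypeL) := by
  refine ContinuousLinearMap.antilipschitz_of_bound _ fun m => ?_
  rw [Real.coe_toNNReal _ (inv_nonneg.mpr (sub_pos.mpr hd).le), le_inv_mul_iff₀ (sub_pos.mpr hd)]
  exact mul_norm_le_norm_orthogonalProjectionOnto m.2

theorem ker_orthogonalProjectionOnto_comp_subtypeL_eq_bot
    (hd : ‖L.starProjection - M.starProjection‖ < 1) :
    (L.orthogonalProjectionOnto ∘L M.subtypeL).ker = ⊥ :=
  LinearMap.ker_eq_bot.mpr (antilipschitzWith_orthogonalProjectionOnto_comp_subtypeL hd).injective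

end

variable [CompleteSpace L] [CompleteSpace M]

theorem range_orthogonalProjectionOnto_comp_subtypeL_eq_top
    (hd : ‖L.starProjection - M.starProjection‖ < 1) :
    (L.orthogonalProjectionOnto ∘L M.subtypeL).range = ⊤ := by
  set A := L.orthogonalProjectionOnto ∘L M.subtypeL
  have : CompleteSpace A.range :=
    ((antilipschitzWith_orthogonalProjectionOnto_comp_subtypeL hd).isClosed_range
      A.uniformContinuous).completeSpace_coe
  rw [← orthogonal_eq_bot_iff, eq_bot_iff]
  intro w hw
  -- `⟪P_L m, w⟫ = ⟪m, w⟫`, so `w ∈ L ⊓ Mᗮ`, which `‖P_L - P_M‖ < 1` forces to be `0`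
  have hwM : (w : E) ∈ Mᗮ := fun m hm => by
    have h := (mem_orthogonal _ w).mp hw (A ⟨m, hm⟩) ⟨⟨m, hm⟩, rfl⟩
    change inner 𝕜 (L.orthogonalProjectionOnto m) w = 0 at h
    rwa [inner_orthogonalProjectionOnto_eq_of_mem_right] at h
  have h := norm_starProjection_orthogonal_le_of_mem (L := M) w.2
  rw [starProjection_eq_self_iff.mpr hwM, norm_sub_rev] at h
  have : (w : E) = 0 := norm_eq_zero.mp (by nlinarith [norm_nonneg (w : E)])
  simpa using this

theorem exists_graph_of_bijective
    (hker : (L.orthogonalProjectionOnto ∘L M.subtypeL).ker = ⊥)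
    (hrange : (L.orthogonalProjectionOnto ∘L M.subtypeL).range = ⊤) :
    ∃ K : L →L[𝕜] Lᗮ, IsGraphOf M K := by
  set e := ContinuousLinearEquiv.ofBijective _ hker hrange
  refine ⟨Lᗮ.orthogonalProjectionOnto ∘L M.subtypeL ∘L (e.symm : L →L[𝕜] M), ?_⟩
  ext z
  constructor
  · intro hz
    refine ⟨L.orthogonalProjectionOnto z, ?_⟩
    have : e.symm (L.orthogonalProjectionOnto z) = ⟨z, hz⟩ := e.symm_apply_apply ⟨z, hz⟩
    simp [this]
  · rintro ⟨x, rfl⟩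
    have hx : L.starProjection (e.symm x) = x := congrArg Subtype.val (e.apply_symm_apply x)
    simp only [ContinuousLinearMap.comp_apply, ContinuousLinearEquiv.coe_coe,
      coe_orthogonalProjectionOnto_apply, subtypeL_apply]
    rw [← hx, starProjection_add_starProjection_orthogonal]
    exact (e.symm x).2

end Submodule

theorem statement_5_general {H : Type*} [NormedAddCommGroup H] [InnerProductSpace ℂ H]
    (L M : Submodule ℂ H) [CompleteSpace L] [CompleteSpace M]
    (PL PM : H →L[ℂ] H)
    (hPL : PL = L.subtypeL ∘L L.orthogonalProjectionOnto)
    (hPM : PM = M.subtypeL ∘L M.orthogonalProjectionOnto) :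
    (‖PL - PM‖ < 1 ↔
      ∃ K : L →L[ℂ] Lᗮ, (M : Set H) = {z : H | ∃ x : L, z = (x : H) + (K x : H)}) ∧
    ∀ K : L →L[ℂ] Lᗮ, (M : Set H) = {z : H | ∃ x : L, z = (x : H) + (K x : H)} →
      ‖K‖ = ‖PL - PM‖ / Real.sqrt (1 - ‖PL - PM‖ ^ 2) ∧
      ‖PL - PM‖ = ‖K‖ / Real.sqrt (1 + ‖K‖ ^ 2) := by
  obtain rfl : PL = L.starProjection := hPL
  obtain rfl : PM = M.starProjection := hPM
  refine ⟨⟨fun hd => ?_, fun ⟨K, hK⟩ => IsGraphOf.norm_starProjection_sub_lt_one hK⟩,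
    fun K hK => ?_⟩
  · exact exists_graph_of_bijective (ker_orthogonalProjectionOnto_comp_subtypeL_eq_bot hd)
      (range_orthogonalProjectionOnto_comp_subtypeL_eq_top hd)
  · have h := IsGraphOf.norm_starProjection_sub_sq_mul_eq hK
    exact ⟨eq_div_sqrt_one_sub_sq (norm_nonneg K) (norm_nonneg _) h,
      eq_div_sqrt_one_add_sq (norm_nonneg K) (norm_nonneg _) h⟩

theorem statement_5 {H : Type*} [NormedAddCommGroup H] [InnerProductSpace ℂ H]
    [CompleteSpace H] (L M : Submodule ℂ H) [CompleteSpace L] [CompleteSpace M]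
    (PL PM : H →L[ℂ] H)
    (hPL : PL = L.subtypeL ∘L L.orthogonalProjectionOnto)
    (hPM : PM = M.subtypeL ∘L M.orthogonalProjectionOnto) :
    (‖PL - PM‖ < 1 ↔
      ∃ K : L →L[ℂ] Lᗮ, (M : Set H) = {z : H | ∃ x : L, z = (x : H) + (K x : H)}) ∧
    ∀ K : L →L[ℂ] Lᗮ, (M : Set H) = {z : H | ∃ x : L, z = (x : H) + (K x : H)} →
      ‖K‖ = ‖PL - PM‖ / Real.sqrt (1 - ‖PL - PM‖ ^ 2) ∧
      ‖PL - PM‖ = ‖K‖ / Real.sqrt (1 + ‖K‖ ^ 2) :=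
  statement_5_general L M PL PM hPL hPM
end
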